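/- Assume the constants and setting of the first micro-macro inequality, with c₅ = [(2^{−r} − b^r)·b^d·λ^d(B(0,1))]^{−1}, and suppose that for some set A ⊂ ℝ^d and constants c > 0, n₀ ∈ ℕ one has P(B(x, b·d(x,α_n)))/λ^d(B(x, b·d(x,α_n))) ≥ c/2 for all n ≥ n₀ and all x ∈ A with 0 < λ^d(A) < ∞. Then for all n ≥ n₀, c₅·(e_{n,r}^r − e_{n+1,r}^r) ≥ (c/2)·e_{n,r+d}^{r+d}(λ^d(·|A)), where λ^d(·|A) is normalized Lebesgue measure on A and e_{n,s}(Q) is the n-th quantization error of order s for Q. -/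
import Mathlib


open MeasureTheory Metric

/-- The `n`-th level `s`-th power quantization error `e_{n,s}^s(Q)`. -/
noncomputable def qerrPow {d : ℕ} (Q : Measure (EuclideanSpace ℝ (Fin d))) (s : ℝ) (n : ℕ) : ℝ :=
  sInf {e : ℝ | ∃ α : Finset (EuclideanSpace ℝ (Fin d)), α.card ≤ n ∧
    e = ∫ x, infDist x (α : Set (EuclideanSpace ℝ (Fin d))) ^ s ∂Q}

/-- averaging the first micro-macro inequality over a set `A` on which the
density ratio is bounded below by `c/2` yields
`c₅(e_{n,r}^r − e_{n+1,r}^r) ≥ (c/2)·e_{n,r+d}^{r+d}(λ^d(·|A))` for `n ≥ n₀`. -/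
theorem stmt12 (d : ℕ) (hd : 0 < d) (P : Measure (EuclideanSpace ℝ (Fin d)))
    [IsProbabilityMeasure P] (r : ℝ) (hr : 0 < r)
    (hmom : Integrable (fun x => ‖x‖ ^ r) P)
    (b c₅ : ℝ) (hb : b ∈ Set.Ioo (0 : ℝ) (1 / 2))
    (hc₅ : c₅ = ((2 ^ (-r) - b ^ r) * b ^ (d : ℝ) *
      (volume (ball (0 : EuclideanSpace ℝ (Fin d)) 1)).toReal)⁻¹)
    (α : ℕ → Finset (EuclideanSpace ℝ (Fin d)))
    (hopt : ∀ n, (α n).card ≤ n ∧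
      ∫ x, infDist x ((α n : Set (EuclideanSpace ℝ (Fin d)))) ^ r ∂P = qerrPow P r n)
    (hmm : ∀ n : ℕ, ∀ x : EuclideanSpace ℝ (Fin d),
      infDist x ((α n : Set (EuclideanSpace ℝ (Fin d)))) ^ (r + d) *
          ((P (ball x (b * infDist x ((α n : Set (EuclideanSpace ℝ (Fin d))))))).toReal /
            (volume (ball x (b * infDist x ((α n : Set (EuclideanSpace ℝ (Fin d))))))).toReal)
        ≤ c₅ * (qerrPow P r n - qerrPow P r (n + 1)))
    (A : Set (EuclideanSpace ℝ (Fin d))) (hAmeas : MeasurableSet A)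
    (hApos : 0 < volume A) (hAfin : volume A < ⊤)
    (c : ℝ) (hc : 0 < c) (n₀ : ℕ)
    (hlb : ∀ n ≥ n₀, ∀ x ∈ A,
      c / 2 ≤ (P (ball x (b * infDist x ((α n : Set (EuclideanSpace ℝ (Fin d))))))).toReal /
        (volume (ball x (b * infDist x ((α n : Set (EuclideanSpace ℝ (Fin d))))))).toReal) :
    ∀ n ≥ n₀,
      (c / 2) * qerrPow ((volume A)⁻¹ • volume.restrict A) (r + d) n ≤
        c₅ * (qerrPow P r n - qerrPow P r (n + 1)) := by
  intro n hn
  set μ : Measure (EuclideanSpace ℝ (Fin d)) := (volume A)⁻¹ • volume.restrict A with hμ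
  have hμprob : IsProbabilityMeasure μ := by
    constructor
    simp only [hμ, Measure.smul_apply, Measure.restrict_apply MeasurableSet.univ,
      Set.univ_inter, smul_eq_mul]
    exact ENNReal.inv_mul_cancel hApos.ne' hAfin.ne
  set Δ : ℝ := c₅ * (qerrPow P r n - qerrPow P r (n + 1)) with hΔ
  -- pointwise bound on A
  have hpt : ∀ x ∈ A, (c / 2) * infDist x ((α n : Set (EuclideanSpace ℝ (Fin d)))) ^ (r + (d : ℝ)) ≤ Δ := by
    intro x hx
    have h1 := hmm n x
    have h2 := hlb n hn x hx
    have hnn : (0 : ℝ) ≤ infDist x ((α n : Set (EuclideanSpace ℝ (Fin d)))) ^ (r + (d : ℝ)) :=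
      Real.rpow_nonneg infDist_nonneg _
    calc (c / 2) * infDist x ((α n : Set (EuclideanSpace ℝ (Fin d)))) ^ (r + (d : ℝ))
        ≤ infDist x ((α n : Set (EuclideanSpace ℝ (Fin d)))) ^ (r + (d : ℝ)) *
          ((P (ball x (b * infDist x ((α n : Set (EuclideanSpace ℝ (Fin d))))))).toReal /
            (volume (ball x (b * infDist x ((α n : Set (EuclideanSpace ℝ (Fin d))))))).toReal) := by
          rw [mul_comm]
          exact mul_le_mul_of_nonneg_left h2 hnn
      _ ≤ Δ := h1
  have hΔnn : (0 : ℝ) ≤ Δ := by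
    have := hpt
    -- A is nonempty since it has positive measure
    obtain ⟨x, hx⟩ : A.Nonempty := by
      by_contra h
      rw [Set.not_nonempty_iff_eq_empty] at h
      simp [h] at hApos
    have h1 := hpt x hx
    have : (0:ℝ) ≤ (c / 2) * infDist x ((α n : Set (EuclideanSpace ℝ (Fin d)))) ^ (r + (d : ℝ)) :=
      mul_nonneg (by linarith) (Real.rpow_nonneg infDist_nonneg _)
    linarith
  -- the integral wrt μ is at most Δ / (c/2)... directly: ∫ (c/2) f dμ ≤ Δ
  have hae : ∀ᵐ x ∂μ, (c / 2) * infDist x ((α n : Set (EuclideanSpace ℝ (Fin d)))) ^ (r + (d : ℝ)) ≤ Δ := by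
    exact Measure.ae_smul_measure
      (by filter_upwards [ae_restrict_mem hAmeas] with x hx using hpt x hx) _
  have hInt : (c / 2) * ∫ x, infDist x ((α n : Set (EuclideanSpace ℝ (Fin d)))) ^ (r + (d : ℝ)) ∂μ ≤ Δ := by
    rw [← integral_const_mul]
    calc ∫ x, (c / 2) * infDist x ((α n : Set (EuclideanSpace ℝ (Fin d)))) ^ (r + (d : ℝ)) ∂μ
        ≤ ∫ _, Δ ∂μ := by
          apply integral_mono_of_nonneg
          · filter_upwards with x
            exact mul_nonneg (by linarith) (Real.rpow_nonneg infDist_nonneg _)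
          · exact integrable_const Δ
          · exact hae
      _ = Δ := by simp
  -- qerrPow μ (r+d) n ≤ the integral
  have hqle : qerrPow μ (r + (d : ℝ)) n ≤
      ∫ x, infDist x ((α n : Set (EuclideanSpace ℝ (Fin d)))) ^ (r + (d : ℝ)) ∂μ := by
    apply csInf_le
    · refine ⟨0, ?_⟩
      rintro e ⟨β, -, rfl⟩
      exact integral_nonneg fun x => Real.rpow_nonneg infDist_nonneg _
    · exact ⟨α n, (hopt n).1, rfl⟩
  calc (c / 2) * qerrPow μ (r + (d : ℝ)) n
      ≤ (c / 2) * ∫ x, infDist x ((α n : Set (EuclideanSpace ℝ (Fin d)))) ^ (r + (d : ℝ)) ∂μ :=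
        mul_le_mul_of_nonneg_left hqle (by linarith)
    _ ≤ Δ := hInt
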